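/- For all natural numbers n and k with 1 ≤ k, the Stirling number of the second kind satisfies S(n,k) = (1/k!) · Σ_{i=0}^{k} (-1)^i · C(k,i) · (k-i)^n; equivalently, k! · S(n,k) = Σ_{i=0}^{k} (-1)^i · C(k,i) · (k-i)^n. -/
import Mathlib


/-- Stirling numbers of the second kind, via the standard recurrence. -/
def stirling : ℕ → ℕ → ℕ
  | 0, 0 => 1
  | 0, _ + 1 => 0
  | _ + 1, 0 => 0
  | n + 1, k + 1 => (k + 1) * stirling n (k + 1) + stirling n k

private def F (n k : ℕ) : ℤ :=
  ∑ i ∈ Finset.range (k + 1), (-1 : ℤ) ^ i * (k.choose i) * ((k - i : ℕ) : ℤ) ^ n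

private lemma F_zero (k : ℕ) : F 0 k = if k = 0 then 1 else 0 := by
  unfold F
  simp [Int.alternating_sum_range_choose]

private lemma F_succ (n m : ℕ) :
    F (n + 1) (m + 1) = (m + 1) * F n (m + 1) + (m + 1) * F n m := by
  have h1 : F (n + 1) (m + 1)
      = ∑ i ∈ Finset.range (m + 2),
        ((-1 : ℤ) ^ i * ((m+1).choose i) * ((m+1-i : ℕ) : ℤ) ^ n * (m+1)
          - (-1 : ℤ) ^ i * ((m+1).choose i) * ((m+1-i : ℕ) : ℤ) ^ n * i) := by
    unfold F
    refine Finset.sum_congr rfl fun i hi => ?_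
    have hi' : i ≤ m + 1 := by
      have := Finset.mem_range.mp hi; omega
    have hc : ((m + 1 - i : ℕ) : ℤ) = (m + 1 : ℤ) - i := by
      push_cast [hi']; ring
    rw [pow_succ, hc]
    ring
  rw [h1, Finset.sum_sub_distrib]
  have h2 : ∑ i ∈ Finset.range (m + 2),
      (-1 : ℤ) ^ i * ((m+1).choose i) * ((m+1-i : ℕ) : ℤ) ^ n * (m+1)
      = (m + 1) * F n (m + 1) := by
    unfold F
    rw [Finset.mul_sum]
    exact Finset.sum_congr rfl fun i _ => by ring
  have h3 : ∑ i ∈ Finset.range (m + 2),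
      (-1 : ℤ) ^ i * ((m+1).choose i) * ((m+1-i : ℕ) : ℤ) ^ n * i
      = -((m + 1) * F n m) := by
    rw [Finset.sum_range_succ']
    have h4 : ∀ j ∈ Finset.range (m + 1),
        (-1 : ℤ) ^ (j+1) * ((m+1).choose (j+1)) * ((m+1-(j+1) : ℕ) : ℤ) ^ n * ((j+1 : ℕ) : ℤ)
        = -((m + 1) * ((-1 : ℤ) ^ j * (m.choose j) * ((m - j : ℕ) : ℤ) ^ n)) := by
      intro j _
      have hc : ((m+1) * m.choose j : ℤ) = ((m+1).choose (j+1) : ℤ) * (j+1) := by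
        exact_mod_cast Nat.add_one_mul_choose_eq m j
      have hs : (m + 1 - (j + 1) : ℕ) = m - j := by omega
      rw [hs]
      push_cast
      linear_combination (-1 : ℤ) ^ j * ((m - j : ℕ) : ℤ) ^ n * hc
    rw [Finset.sum_congr rfl h4]
    unfold F
    simp [Finset.mul_sum]
  rw [h2, h3]
  ring

private lemma key : ∀ n k : ℕ, (k.factorial * stirling n k : ℤ) = F n k := by
  intro n
  induction n with
  | zero =>
    intro k
    rw [F_zero]
    cases k with
    | zero => simp [stirling]
    | succ m => simp [stirling]
  | succ n ih =>
    intro k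
    cases k with
    | zero =>
      simp [stirling]
      unfold F
      simp
    | succ m =>
      rw [F_succ, ← ih (m + 1), ← ih m]
      show (((m+1).factorial : ℤ) * ((m + 1) * stirling n (m + 1) + stirling n m : ℕ) : ℤ) = _
      push_cast [Nat.factorial_succ]
      ring

theorem stirling_explicit_formula (n k : ℕ) (hk : 1 ≤ k) :
    (k.factorial * stirling n k : ℤ) =
      ∑ i ∈ Finset.range (k + 1), (-1 : ℤ) ^ i * (k.choose i) * ((k - i : ℕ) : ℤ) ^ n := by
  exact key n k
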